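/- Let A be a DG Poisson Hopf algebra with bracket of degree 0 and antipode S. For all homogeneous a, b ∈ A: S(a_{(1)}){a_{(2)}, b} = -(-1)^{|b||a_{(2)}|}{S(a_{(1)}), b}a_{(2)} and {a, S(b_{(1)})}b_{(2)} = -(-1)^{|a||b_{(1)}|}S(b_{(1)}){a, b_{(2)}} (Sweedler notation with implicit sums). -/

import Mathlib

open TensorProduct

namespace DGPH

variable {k : Type} [Field k]

/-- The `n`-th graded piece of the induced grading on a tensor product of graded modules. -/
def tgrade {M N : Type} [AddCommGroup M] [Module k M] [AddCommGroup N] [Module k N]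
    (𝒜 : ℤ → Submodule k M) (ℬ : ℤ → Submodule k N) (n : ℤ) : Submodule k (M ⊗[k] N) :=
  ⨆ ij : {q : ℤ × ℤ // q.1 + q.2 = n},
    Submodule.span k
      (Set.image2 (fun a b => a ⊗ₜ[k] b) ((𝒜 ij.1.1 : Set M)) ((ℬ ij.1.2 : Set N)))

/-- Characterization of the Koszul-signed multiplication on a tensor product:
`(a ⊗ b)(a' ⊗ b') = (-1)^{|a'||b|} (a a') ⊗ (b b')`. -/
def KoszulMulChar {M N : Type} [AddCommGroup M] [Module k M] [AddCommGroup N] [Module k N]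
    (𝒜 : ℤ → Submodule k M) (ℬ : ℤ → Submodule k N)
    (mulM : M →ₗ[k] M →ₗ[k] M) (mulN : N →ₗ[k] N →ₗ[k] N)
    (μ : (M ⊗[k] N) →ₗ[k] (M ⊗[k] N) →ₗ[k] (M ⊗[k] N)) : Prop :=
  ∀ ⦃i j : ℤ⦄ (a : M) ⦃a' : M⦄ ⦃b : N⦄ (b' : N), a' ∈ 𝒜 i → b ∈ ℬ j →
    μ (a ⊗ₜ[k] b) (a' ⊗ₜ[k] b') = ((-1 : k) ^ (i * j)) • ((mulM a a') ⊗ₜ[k] (mulN b b'))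

/-- Characterization of the Koszul-signed Poisson bracket of degree `p` on a tensor product:
`{a⊗b, a'⊗b'} = (-1)^{(|a'|+p)|b|} {a,a'} ⊗ (bb') + (-1)^{(|b|+p)|a'|} (aa') ⊗ {b,b'}`. -/
def KoszulBracketChar {M N : Type} [AddCommGroup M] [Module k M] [AddCommGroup N] [Module k N]
    (𝒜 : ℤ → Submodule k M) (ℬ : ℤ → Submodule k N)
    (mulM : M →ₗ[k] M →ₗ[k] M) (mulN : N →ₗ[k] N →ₗ[k] N)
    (brM : M →ₗ[k] M →ₗ[k] M) (brN : N →ₗ[k] N →ₗ[k] N) (p : ℤ)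
    (β : (M ⊗[k] N) →ₗ[k] (M ⊗[k] N) →ₗ[k] (M ⊗[k] N)) : Prop :=
  ∀ ⦃i j : ℤ⦄ (a : M) ⦃a' : M⦄ ⦃b : N⦄ (b' : N), a' ∈ 𝒜 i → b ∈ ℬ j →
    β (a ⊗ₜ[k] b) (a' ⊗ₜ[k] b') =
      ((-1 : k) ^ ((i + p) * j)) • ((brM a a') ⊗ₜ[k] (mulN b b')) +
      ((-1 : k) ^ ((j + p) * i)) • ((mulM a a') ⊗ₜ[k] (brN b b'))

/-- Characterization of the Koszul-signed differential on a tensor product: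
`d(a ⊗ b) = d a ⊗ b + (-1)^{|a|} a ⊗ d b`. -/
def KoszulDiffChar {M N : Type} [AddCommGroup M] [Module k M] [AddCommGroup N] [Module k N]
    (𝒜 : ℤ → Submodule k M) (dM : M →ₗ[k] M) (dN : N →ₗ[k] N)
    (D : M ⊗[k] N →ₗ[k] M ⊗[k] N) : Prop :=
  ∀ ⦃i : ℤ⦄ ⦃a : M⦄ (b : N), a ∈ 𝒜 i →
    D (a ⊗ₜ[k] b) = (dM a) ⊗ₜ[k] b + ((-1 : k) ^ i) • (a ⊗ₜ[k] (dN b))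

/-- Characterization of the Koszul twist `T(a ⊗ b) = (-1)^{|a||b|} b ⊗ a`. -/
def KoszulTwistChar {M N : Type} [AddCommGroup M] [Module k M] [AddCommGroup N] [Module k N]
    (𝒜 : ℤ → Submodule k M) (ℬ : ℤ → Submodule k N)
    (T : M ⊗[k] N →ₗ[k] N ⊗[k] M) : Prop :=
  ∀ ⦃i j : ℤ⦄ ⦃a : M⦄ ⦃b : N⦄, a ∈ 𝒜 i → b ∈ ℬ j →
    T (a ⊗ₜ[k] b) = ((-1 : k) ^ (i * j)) • (b ⊗ₜ[k] a)

section Structures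

variable (k)
variable (M : Type) [AddCommGroup M] [Module k M]

/-- A `ℤ`-graded associative unital algebra, given by unbundled data. -/
structure IsGradedAlgebra (𝒜 : ℤ → Submodule k M) (mul : M →ₗ[k] M →ₗ[k] M) (one : M) :
    Prop where
  indep : iSupIndep 𝒜
  total : (⨆ i, 𝒜 i) = ⊤
  mul_mem : ∀ ⦃i j : ℤ⦄ ⦃a b : M⦄, a ∈ 𝒜 i → b ∈ 𝒜 j → mul a b ∈ 𝒜 (i + j)
  one_mem : one ∈ 𝒜 0
  mul_assoc : ∀ a b c : M, mul (mul a b) c = mul a (mul b c)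
  one_mul : ∀ a : M, mul one a = a
  mul_one : ∀ a : M, mul a one = a

/-- A differential graded algebra. -/
structure IsDGAlgebra (𝒜 : ℤ → Submodule k M) (mul : M →ₗ[k] M →ₗ[k] M) (one : M)
    (d : M →ₗ[k] M) extends IsGradedAlgebra k M 𝒜 mul one : Prop where
  d_mem : ∀ ⦃i : ℤ⦄ ⦃a : M⦄, a ∈ 𝒜 i → d a ∈ 𝒜 (i + 1)
  d_sq : ∀ a : M, d (d a) = 0
  d_mul : ∀ ⦃i : ℤ⦄ ⦃a : M⦄ (b : M), a ∈ 𝒜 i →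
    d (mul a b) = mul (d a) b + ((-1 : k) ^ i) • mul a (d b)

/-- A differential graded Poisson algebra with Poisson bracket of degree `p`. -/
structure IsDGPoisson (𝒜 : ℤ → Submodule k M) (mul : M →ₗ[k] M →ₗ[k] M) (one : M)
    (bracket : M →ₗ[k] M →ₗ[k] M) (d : M →ₗ[k] M) (p : ℤ)
    extends IsDGAlgebra k M 𝒜 mul one d : Prop where
  gcomm : ∀ ⦃i j : ℤ⦄ ⦃a b : M⦄, a ∈ 𝒜 i → b ∈ 𝒜 j →
    mul a b = ((-1 : k) ^ (i * j)) • mul b a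
  bracket_mem : ∀ ⦃i j : ℤ⦄ ⦃a b : M⦄, a ∈ 𝒜 i → b ∈ 𝒜 j → bracket a b ∈ 𝒜 (i + j + p)
  bracket_antisymm : ∀ ⦃i j : ℤ⦄ ⦃a b : M⦄, a ∈ 𝒜 i → b ∈ 𝒜 j →
    bracket a b = -(((-1 : k) ^ ((i + p) * (j + p))) • bracket b a)
  bracket_jacobi : ∀ ⦃i j : ℤ⦄ ⦃a b : M⦄ (c : M), a ∈ 𝒜 i → b ∈ 𝒜 j →
    bracket a (bracket b c) =
      bracket (bracket a b) c + ((-1 : k) ^ ((i + p) * (j + p))) • bracket b (bracket a c)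
  bracket_leibniz : ∀ ⦃i j : ℤ⦄ ⦃a b : M⦄ (c : M), a ∈ 𝒜 i → b ∈ 𝒜 j →
    bracket a (mul b c) =
      mul (bracket a b) c + ((-1 : k) ^ ((i + p) * j)) • mul b (bracket a c)
  d_bracket : ∀ ⦃i : ℤ⦄ ⦃a : M⦄ (b : M), a ∈ 𝒜 i →
    d (bracket a b) = bracket (d a) b + ((-1 : k) ^ (i + p)) • bracket a (d b)

/-- A `ℤ`-graded coalgebra, given by unbundled data. -/
structure IsGradedCoalgebra (𝒜 : ℤ → Submodule k M) (comul : M →ₗ[k] M ⊗[k] M)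
    (counit : M →ₗ[k] k) : Prop where
  comul_mem : ∀ ⦃i : ℤ⦄ ⦃a : M⦄, a ∈ 𝒜 i → comul a ∈ tgrade 𝒜 𝒜 i
  counit_zero : ∀ ⦃i : ℤ⦄ ⦃a : M⦄, a ∈ 𝒜 i → i ≠ 0 → counit a = 0
  coassoc : ∀ a : M,
    (TensorProduct.assoc k M M M) ((TensorProduct.map comul LinearMap.id) (comul a)) =
      (TensorProduct.map LinearMap.id comul) (comul a)
  counit_comul_left : ∀ a : M,
    (TensorProduct.lid k M) ((TensorProduct.map counit LinearMap.id) (comul a)) = a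
  counit_comul_right : ∀ a : M,
    (TensorProduct.rid k M) ((TensorProduct.map LinearMap.id counit) (comul a)) = a

/-- A `ℤ`-graded bialgebra (comultiplication is an algebra map for the Koszul-signed
multiplication on the tensor square). -/
structure IsGradedBialgebra (𝒜 : ℤ → Submodule k M) (mul : M →ₗ[k] M →ₗ[k] M) (one : M)
    (comul : M →ₗ[k] M ⊗[k] M) (counit : M →ₗ[k] k) : Prop where
  alg : IsGradedAlgebra k M 𝒜 mul one
  coalg : IsGradedCoalgebra k M 𝒜 comul counit
  comul_one : comul one = one ⊗ₜ[k] one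
  counit_one : counit one = 1
  counit_mul : ∀ a b : M, counit (mul a b) = counit a * counit b
  comul_mul : ∃ mul₂ : (M ⊗[k] M) →ₗ[k] (M ⊗[k] M) →ₗ[k] (M ⊗[k] M),
    KoszulMulChar 𝒜 𝒜 mul mul mul₂ ∧
      ∀ a b : M, comul (mul a b) = mul₂ (comul a) (comul b)

/-- A `ℤ`-graded Hopf algebra. -/
structure IsGradedHopf (𝒜 : ℤ → Submodule k M) (mul : M →ₗ[k] M →ₗ[k] M) (one : M)
    (comul : M →ₗ[k] M ⊗[k] M) (counit : M →ₗ[k] k) (S : M →ₗ[k] M) : Prop where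
  bialg : IsGradedBialgebra k M 𝒜 mul one comul counit
  antipode_mem : ∀ ⦃i : ℤ⦄ ⦃a : M⦄, a ∈ 𝒜 i → S a ∈ 𝒜 i
  antipode_left : ∀ a : M,
    TensorProduct.lift mul ((TensorProduct.map S LinearMap.id) (comul a)) = counit a • one
  antipode_right : ∀ a : M,
    TensorProduct.lift mul ((TensorProduct.map LinearMap.id S) (comul a)) = counit a • one

/-- `d` is a coderivation (with Koszul signs) and `ε ∘ d = 0`. -/
def CoderivationProp (𝒜 : ℤ → Submodule k M) (comul : M →ₗ[k] M ⊗[k] M)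
    (counit : M →ₗ[k] k) (d : M →ₗ[k] M) : Prop :=
  (∀ a : M, counit (d a) = 0) ∧
  ∃ D : M ⊗[k] M →ₗ[k] M ⊗[k] M, KoszulDiffChar 𝒜 d d D ∧
    ∀ a : M, comul (d a) = D (comul a)

/-- A differential graded bialgebra. -/
structure IsDGBialgebra (𝒜 : ℤ → Submodule k M) (mul : M →ₗ[k] M →ₗ[k] M) (one : M)
    (comul : M →ₗ[k] M ⊗[k] M) (counit : M →ₗ[k] k) (d : M →ₗ[k] M) : Prop where
  bialg : IsGradedBialgebra k M 𝒜 mul one comul counit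
  dga : IsDGAlgebra k M 𝒜 mul one d
  coderiv : CoderivationProp k M 𝒜 comul counit d

/-- A differential graded Hopf algebra. -/
structure IsDGHopf (𝒜 : ℤ → Submodule k M) (mul : M →ₗ[k] M →ₗ[k] M) (one : M)
    (comul : M →ₗ[k] M ⊗[k] M) (counit : M →ₗ[k] k) (d : M →ₗ[k] M) (S : M →ₗ[k] M) :
    Prop where
  dgbialg : IsDGBialgebra k M 𝒜 mul one comul counit d
  antipode_mem : ∀ ⦃i : ℤ⦄ ⦃a : M⦄, a ∈ 𝒜 i → S a ∈ 𝒜 i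
  antipode_left : ∀ a : M,
    TensorProduct.lift mul ((TensorProduct.map S LinearMap.id) (comul a)) = counit a • one
  antipode_right : ∀ a : M,
    TensorProduct.lift mul ((TensorProduct.map LinearMap.id S) (comul a)) = counit a • one

/-- A differential graded Poisson bialgebra (bracket of degree 0). -/
structure IsDGPoissonBialgebra (𝒜 : ℤ → Submodule k M) (mul : M →ₗ[k] M →ₗ[k] M) (one : M)
    (bracket : M →ₗ[k] M →ₗ[k] M) (d : M →ₗ[k] M)
    (comul : M →ₗ[k] M ⊗[k] M) (counit : M →ₗ[k] k) : Prop where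
  poisson : IsDGPoisson k M 𝒜 mul one bracket d 0
  dgbialg : IsDGBialgebra k M 𝒜 mul one comul counit d
  comul_bracket : ∃ br₂ : (M ⊗[k] M) →ₗ[k] (M ⊗[k] M) →ₗ[k] (M ⊗[k] M),
    KoszulBracketChar 𝒜 𝒜 mul mul bracket bracket 0 br₂ ∧
      ∀ a b : M, comul (bracket a b) = br₂ (comul a) (comul b)

/-- A differential graded Poisson Hopf algebra (bracket of degree 0). -/
structure IsDGPoissonHopf (𝒜 : ℤ → Submodule k M) (mul : M →ₗ[k] M →ₗ[k] M) (one : M)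
    (bracket : M →ₗ[k] M →ₗ[k] M) (d : M →ₗ[k] M)
    (comul : M →ₗ[k] M ⊗[k] M) (counit : M →ₗ[k] k) (S : M →ₗ[k] M) : Prop where
  toPoissonBialg : IsDGPoissonBialgebra k M 𝒜 mul one bracket d comul counit
  antipode_mem : ∀ ⦃i : ℤ⦄ ⦃a : M⦄, a ∈ 𝒜 i → S a ∈ 𝒜 i
  antipode_left : ∀ a : M,
    TensorProduct.lift mul ((TensorProduct.map S LinearMap.id) (comul a)) = counit a • one
  antipode_right : ∀ a : M,
    TensorProduct.lift mul ((TensorProduct.map LinearMap.id S) (comul a)) = counit a • one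

end Structures

/-- A homomorphism of differential graded algebras (unbundled data). -/
structure IsDGAlgHom {M N : Type} [AddCommGroup M] [Module k M] [AddCommGroup N] [Module k N]
    (𝒜 : ℤ → Submodule k M) (mulM : M →ₗ[k] M →ₗ[k] M) (oneM : M) (dM : M →ₗ[k] M)
    (ℬ : ℤ → Submodule k N) (mulN : N →ₗ[k] N →ₗ[k] N) (oneN : N) (dN : N →ₗ[k] N)
    (f : M →ₗ[k] N) : Prop where
  map_mem : ∀ ⦃i : ℤ⦄ ⦃a : M⦄, a ∈ 𝒜 i → f a ∈ ℬ i
  map_one : f oneM = oneN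
  map_mul : ∀ a b : M, f (mulM a b) = mulN (f a) (f b)
  map_d : ∀ a : M, f (dM a) = dN (f a)

/-- A homomorphism of differential graded Poisson algebras. -/
structure IsDGPoissonHom {M N : Type} [AddCommGroup M] [Module k M] [AddCommGroup N] [Module k N]
    (𝒜 : ℤ → Submodule k M) (mulM : M →ₗ[k] M →ₗ[k] M) (oneM : M)
    (brM : M →ₗ[k] M →ₗ[k] M) (dM : M →ₗ[k] M)
    (ℬ : ℤ → Submodule k N) (mulN : N →ₗ[k] N →ₗ[k] N) (oneN : N)
    (brN : N →ₗ[k] N →ₗ[k] N) (dN : N →ₗ[k] N)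
    (f : M →ₗ[k] N)
    extends IsDGAlgHom 𝒜 mulM oneM dM ℬ mulN oneN dN f : Prop where
  map_bracket : ∀ a b : M, f (brM a b) = brN (f a) (f b)

/-- `(E, m, h)` is the universal enveloping algebra of the DG Poisson algebra
`(A, 𝒜, mulA, oneA, brA, dA)` with bracket of degree `p`. -/
structure IsUEA {A E : Type} [AddCommGroup A] [Module k A] [AddCommGroup E] [Module k E]
    (𝒜 : ℤ → Submodule k A) (mulA : A →ₗ[k] A →ₗ[k] A) (oneA : A)
    (brA : A →ₗ[k] A →ₗ[k] A) (dA : A →ₗ[k] A) (p : ℤ)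
    (ℰ : ℤ → Submodule k E) (mulE : E →ₗ[k] E →ₗ[k] E) (oneE : E) (dE : E →ₗ[k] E)
    (m h : A →ₗ[k] E) : Prop where
  dga : IsDGAlgebra k E ℰ mulE oneE dE
  m_hom : IsDGAlgHom 𝒜 mulA oneA dA ℰ mulE oneE dE m
  h_mem : ∀ ⦃i : ℤ⦄ ⦃a : A⦄, a ∈ 𝒜 i → h a ∈ ℰ (i + p)
  h_d : ∀ a : A, h (dA a) = dE (h a)
  h_lie : ∀ ⦃i j : ℤ⦄ ⦃a b : A⦄, a ∈ 𝒜 i → b ∈ 𝒜 j →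
    h (brA a b) = mulE (h a) (h b) - ((-1 : k) ^ ((i + p) * (j + p))) • mulE (h b) (h a)
  m_bracket : ∀ ⦃i j : ℤ⦄ ⦃a b : A⦄, a ∈ 𝒜 i → b ∈ 𝒜 j →
    m (brA a b) = mulE (h a) (m b) - ((-1 : k) ^ ((i + p) * j)) • mulE (m b) (h a)
  h_mul : ∀ ⦃i j : ℤ⦄ ⦃a b : A⦄, a ∈ 𝒜 i → b ∈ 𝒜 j →
    h (mulA a b) = mulE (m a) (h b) + ((-1 : k) ^ (i * j)) • mulE (m b) (h a)
  universal : ∀ (D : Type) [AddCommGroup D] [Module k D]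
    (𝒟 : ℤ → Submodule k D) (mulD : D →ₗ[k] D →ₗ[k] D) (oneD : D) (dD : D →ₗ[k] D)
    (f g : A →ₗ[k] D),
    IsDGAlgebra k D 𝒟 mulD oneD dD →
    IsDGAlgHom 𝒜 mulA oneA dA 𝒟 mulD oneD dD f →
    (∀ ⦃i : ℤ⦄ ⦃a : A⦄, a ∈ 𝒜 i → g a ∈ 𝒟 (i + p)) →
    (∀ a : A, g (dA a) = dD (g a)) →
    (∀ ⦃i j : ℤ⦄ ⦃a b : A⦄, a ∈ 𝒜 i → b ∈ 𝒜 j →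
      g (brA a b) = mulD (g a) (g b) - ((-1 : k) ^ ((i + p) * (j + p))) • mulD (g b) (g a)) →
    (∀ ⦃i j : ℤ⦄ ⦃a b : A⦄, a ∈ 𝒜 i → b ∈ 𝒜 j →
      f (brA a b) = mulD (g a) (f b) - ((-1 : k) ^ ((i + p) * j)) • mulD (f b) (g a)) →
    (∀ ⦃i j : ℤ⦄ ⦃a b : A⦄, a ∈ 𝒜 i → b ∈ 𝒜 j →
      g (mulA a b) = mulD (f a) (g b) + ((-1 : k) ^ (i * j)) • mulD (f b) (g a)) →
    ∃! φ : E →ₗ[k] D, IsDGAlgHom ℰ mulE oneE dE 𝒟 mulD oneD dD φ ∧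
      φ ∘ₗ m = f ∧ φ ∘ₗ h = g

end DGPH

/-!
Since `S(a₁)a₂ = ε(a)1` and the unit is central for the bracket (`{x, 1} = 0` by the Leibniz
rule, `{1, x} = 0` by antisymmetry), both `{S(a₁)a₂, b}` and `{a, S(b₁)b₂}` vanish. Expanding
them by the Leibniz rule in the first, resp. second, slot on each homogeneous tensor splits this
zero into the two sides of the identities. The Koszul sign `(-1)^{l|a₂|}`, which depends on the
degree of a tensor factor, is realized by the linear operator acting by `(-1)^{lj}` on the
`j`-th graded piece; it exists because the grading is an internal direct sum.
-/

namespace DGPH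

open TensorProduct

section GradedModule

variable {ι R M N : Type*} [CommSemiring R] [AddCommMonoid M] [Module R M]
  [AddCommMonoid N] [Module R N] {𝒜 : ι → Submodule R M}

theorem linearMap_ext_of_iSup_eq_top (h𝒜 : ⨆ i, 𝒜 i = ⊤) {f g : M →ₗ[R] N}
    (h : ∀ ⦃i : ι⦄ ⦃x : M⦄, x ∈ 𝒜 i → f x = g x) : f = g :=
  LinearMap.ext_on (Submodule.iSup_eq_span 𝒜 ▸ h𝒜) fun x hx => by
    obtain ⟨i, hi⟩ := Set.mem_iUnion.mp hx
    exact h hi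

theorem tensorProduct_ext_of_iSup_eq_top (h𝒜 : ⨆ i, 𝒜 i = ⊤) {f g : M ⊗[R] M →ₗ[R] N}
    (h : ∀ ⦃i j : ι⦄ ⦃x y : M⦄, x ∈ 𝒜 i → y ∈ 𝒜 j → f (x ⊗ₜ y) = g (x ⊗ₜ y)) : f = g :=
  TensorProduct.ext <| linearMap_ext_of_iSup_eq_top h𝒜 fun _ _ hx =>
    linearMap_ext_of_iSup_eq_top h𝒜 fun _ _ hy => h hx hy

variable [DecidableEq ι]

noncomputable def gradedSMul (h𝒜 : DirectSum.IsInternal 𝒜) (c : ι → R) : M →ₗ[R] M :=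
  DirectSum.toModule R ι M (fun i => c i • (𝒜 i).subtype) ∘ₗ
    (LinearEquiv.ofBijective (DirectSum.coeLinearMap 𝒜) h𝒜).symm.toLinearMap

theorem gradedSMul_apply_of_mem (h𝒜 : DirectSum.IsInternal 𝒜) (c : ι → R) {i : ι} {x : M}
    (hx : x ∈ 𝒜 i) : gradedSMul h𝒜 c x = c i • x := by
  have hsymm : (LinearEquiv.ofBijective (DirectSum.coeLinearMap 𝒜) h𝒜).symm x =
      DirectSum.lof R ι (fun i => 𝒜 i) i ⟨x, hx⟩ := by
    rw [LinearEquiv.symm_apply_eq, DirectSum.lof_eq_of]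
    exact (DirectSum.coeLinearMap_of 𝒜 i ⟨x, hx⟩).symm
  simp [gradedSMul, hsymm, DirectSum.toModule_lof]

end GradedModule

section Signs

variable {K : Type*} [DivisionRing K]

theorem neg_one_zpow_mul_neg_one_zpow (m n : ℤ) :
    (-1 : K) ^ m * (-1 : K) ^ n = (-1 : K) ^ (m + n) :=
  (zpow_add₀ (neg_ne_zero.mpr one_ne_zero) m n).symm

theorem neg_one_zpow_eq_of_even_sub {m n : ℤ} (h : Even (m - n)) :
    (-1 : K) ^ m = (-1 : K) ^ n := by
  rw [← sub_add_cancel m n, ← neg_one_zpow_mul_neg_one_zpow, h.neg_one_zpow, one_mul]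

end Signs

theorem IsGradedAlgebra.isInternal {k : Type} [Field k] {A : Type} [AddCommGroup A]
    [Module k A] {𝒜 : ℤ → Submodule k A} {mul : A →ₗ[k] A →ₗ[k] A} {one : A}
    (h : IsGradedAlgebra k A 𝒜 mul one) : DirectSum.IsInternal 𝒜 :=
  DirectSum.isInternal_submodule_of_iSupIndep_of_iSup_eq_top h.indep h.total

namespace IsDGPoisson

variable {k : Type} [Field k] {A : Type} [AddCommGroup A] [Module k A]
  {𝒜 : ℤ → Submodule k A} {mul : A →ₗ[k] A →ₗ[k] A} {one : A}
  {bracket : A →ₗ[k] A →ₗ[k] A} {d : A →ₗ[k] A} {p : ℤ}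

theorem bracket_one_right (hP : IsDGPoisson k A 𝒜 mul one bracket d p) (x : A) :
    bracket x one = 0 := by
  suffices bracket.flip one = 0 from LinearMap.congr_fun this x
  refine linearMap_ext_of_iSup_eq_top hP.total fun i x hx => ?_
  have h := hP.bracket_leibniz one hx hP.one_mem
  rw [hP.mul_one, hP.mul_one, hP.one_mul, mul_zero, zpow_zero, one_smul,
    left_eq_add] at h
  exact h

theorem bracket_one_left (hP : IsDGPoisson k A 𝒜 mul one bracket d p) (x : A) :
    bracket one x = 0 := by
  suffices bracket one = 0 from LinearMap.congr_fun this x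
  refine linearMap_ext_of_iSup_eq_top hP.total fun j x hx => ?_
  rw [hP.bracket_antisymm hP.one_mem hx, hP.bracket_one_right, smul_zero, neg_zero,
    LinearMap.zero_apply]

theorem bracket_mul_left (hP : IsDGPoisson k A 𝒜 mul one bracket d p)
    {i j l : ℤ} {y z b : A} (hy : y ∈ 𝒜 i) (hz : z ∈ 𝒜 j) (hb : b ∈ 𝒜 l) :
    bracket (mul y z) b =
      mul y (bracket z b) + ((-1 : k) ^ ((l + p) * j)) • mul (bracket y b) z := by
  rw [hP.bracket_antisymm (hP.mul_mem hy hz) hb, hP.bracket_leibniz z hb hy,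
    hP.bracket_antisymm hb hy, hP.bracket_antisymm hb hz]
  simp only [map_neg, map_smul, LinearMap.neg_apply, LinearMap.smul_apply, smul_neg,
    smul_add, smul_smul, neg_one_zpow_mul_neg_one_zpow]
  have hyb : (-1 : k) ^ ((i + j + p) * (l + p) + (l + p) * (i + p)) = (-1 : k) ^ ((l + p) * j) :=
    neg_one_zpow_eq_of_even_sub ⟨(l + p) * (i + p), by ring⟩
  have hzb : (-1 : k) ^ ((i + j + p) * (l + p) + ((l + p) * i + (l + p) * (j + p))) = 1 :=
    Even.neg_one_zpow ⟨(l + p) * (i + j + p), by ring⟩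
  rw [hyb, hzb, one_smul, neg_add, neg_neg, neg_neg, add_comm]

end IsDGPoisson

namespace IsDGPoissonHopf

variable {k : Type} [Field k] {A : Type} [AddCommGroup A] [Module k A]
  {𝒜 : ℤ → Submodule k A} {mul : A →ₗ[k] A →ₗ[k] A} {one : A}
  {bracket : A →ₗ[k] A →ₗ[k] A} {d : A →ₗ[k] A}
  {comul : A →ₗ[k] A ⊗[k] A} {counit : A →ₗ[k] k} {S : A →ₗ[k] A}

theorem bracket_antipode_comul_left (hA : IsDGPoissonHopf k A 𝒜 mul one bracket d comul counit S)
    (a b : A) : bracket (lift mul (map S LinearMap.id (comul a))) b = 0 := by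
  rw [hA.antipode_left, map_smul, LinearMap.smul_apply,
    hA.toPoissonBialg.poisson.bracket_one_left, smul_zero]

theorem bracket_antipode_comul_right (hA : IsDGPoissonHopf k A 𝒜 mul one bracket d comul counit S)
    (a b : A) : bracket a (lift mul (map S LinearMap.id (comul b))) = 0 := by
  rw [hA.antipode_left, map_smul, hA.toPoissonBialg.poisson.bracket_one_right, smul_zero]

theorem antipode_mul_bracket (hA : IsDGPoissonHopf k A 𝒜 mul one bracket d comul counit S)
    {l : ℤ} {b : A} (hb : b ∈ 𝒜 l) :
    ∃ E : A ⊗[k] A →ₗ[k] A,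
      (∀ ⦃j : ℤ⦄ (a₁ : A) ⦃a₂ : A⦄, a₂ ∈ 𝒜 j →
        E (a₁ ⊗ₜ[k] a₂) = -(((-1 : k) ^ (l * j)) • mul (bracket (S a₁) b) a₂)) ∧
      ∀ a : A, lift mul (map S (bracket.flip b) (comul a)) = E (comul a) := by
  have hP := hA.toPoissonBialg.poisson
  let σ := gradedSMul hP.isInternal fun j => (-1 : k) ^ (l * j)
  let E := lift (-((mul ∘ₗ bracket.flip b ∘ₗ S).compl₂ σ))
  have hE : ∀ ⦃j : ℤ⦄ (a₁ : A) ⦃a₂ : A⦄, a₂ ∈ 𝒜 j →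
      E (a₁ ⊗ₜ[k] a₂) = -(((-1 : k) ^ (l * j)) • mul (bracket (S a₁) b) a₂) :=
    fun j a₁ a₂ ha₂ => by simp [E, σ, gradedSMul_apply_of_mem _ _ ha₂]
  refine ⟨E, hE, fun a => ?_⟩
  have hexpand : bracket.flip b ∘ₗ lift mul ∘ₗ map S LinearMap.id =
      lift mul ∘ₗ map S (bracket.flip b) - E :=
    tensorProduct_ext_of_iSup_eq_top hP.total fun i j x y hx hy => by
      simp [hE _ hy, hP.bracket_mul_left (hA.antipode_mem hx) hy hb]
  have := LinearMap.congr_fun hexpand (comul a)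
  simpa [hA.bracket_antipode_comul_left, sub_eq_zero] using this.symm

theorem bracket_antipode_mul (hA : IsDGPoissonHopf k A 𝒜 mul one bracket d comul counit S)
    {l : ℤ} {a : A} (ha : a ∈ 𝒜 l) :
    ∃ E : A ⊗[k] A →ₗ[k] A,
      (∀ ⦃j : ℤ⦄ ⦃b₁ : A⦄ (b₂ : A), b₁ ∈ 𝒜 j →
        E (b₁ ⊗ₜ[k] b₂) = -(((-1 : k) ^ (l * j)) • mul (S b₁) (bracket a b₂))) ∧
      ∀ b : A, lift mul (map (bracket a ∘ₗ S) LinearMap.id (comul b)) = E (comul b) := by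
  have hP := hA.toPoissonBialg.poisson
  let σ := gradedSMul hP.isInternal fun j => (-1 : k) ^ (l * j)
  let E := lift (-((mul ∘ₗ S ∘ₗ σ).compl₂ (bracket a)))
  have hE : ∀ ⦃j : ℤ⦄ ⦃b₁ : A⦄ (b₂ : A), b₁ ∈ 𝒜 j →
      E (b₁ ⊗ₜ[k] b₂) = -(((-1 : k) ^ (l * j)) • mul (S b₁) (bracket a b₂)) :=
    fun j b₁ b₂ hb₁ => by simp [E, σ, gradedSMul_apply_of_mem _ _ hb₁]
  refine ⟨E, hE, fun b => ?_⟩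
  have hexpand : bracket a ∘ₗ lift mul ∘ₗ map S LinearMap.id =
      lift mul ∘ₗ map (bracket a ∘ₗ S) LinearMap.id - E :=
    tensorProduct_ext_of_iSup_eq_top hP.total fun i j x y hx hy => by
      simp [hE _ hx, hP.bracket_leibniz y ha (hA.antipode_mem hx)]
  have := LinearMap.congr_fun hexpand (comul b)
  simpa [hA.bracket_antipode_comul_right, sub_eq_zero] using this.symm

end IsDGPoissonHopf

/-- In a DG Poisson Hopf algebra (bracket of degree 0), for homogeneous
`b` one has `S(a₍₁₎){a₍₂₎, b} = -(-1)^{|b||a₍₂₎|}{S(a₍₁₎), b}a₍₂₎`, and for homogeneous `a`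
one has `{a, S(b₍₁₎)}b₍₂₎ = -(-1)^{|a||b₍₁₎|}S(b₍₁₎){a, b₍₂₎}` (Sweedler notation, with the
sign-twisted right-hand sides expressed by maps characterized on homogeneous tensors). -/
theorem antipode_bracket_identities {k : Type} [Field k]
    (A : Type) [AddCommGroup A] [Module k A]
    (𝒜 : ℤ → Submodule k A) (mul : A →ₗ[k] A →ₗ[k] A) (one : A)
    (bracket : A →ₗ[k] A →ₗ[k] A) (d : A →ₗ[k] A)
    (comul : A →ₗ[k] A ⊗[k] A) (counit : A →ₗ[k] k) (S : A →ₗ[k] A)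
    (hA : IsDGPoissonHopf k A 𝒜 mul one bracket d comul counit S) :
    (∀ ⦃jb : ℤ⦄ ⦃b : A⦄, b ∈ 𝒜 jb →
      ∃ E : A ⊗[k] A →ₗ[k] A,
        (∀ ⦃j : ℤ⦄ (a₁ : A) ⦃a₂ : A⦄, a₂ ∈ 𝒜 j →
          E (a₁ ⊗ₜ[k] a₂) = -(((-1 : k) ^ (jb * j)) • mul (bracket (S a₁) b) a₂)) ∧
        ∀ a : A,
          TensorProduct.lift mul
            ((TensorProduct.map S ((LinearMap.flip bracket) b)) (comul a)) = E (comul a)) ∧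
    (∀ ⦃ia : ℤ⦄ ⦃a : A⦄, a ∈ 𝒜 ia →
      ∃ E' : A ⊗[k] A →ₗ[k] A,
        (∀ ⦃j : ℤ⦄ ⦃b₁ : A⦄ (b₂ : A), b₁ ∈ 𝒜 j →
          E' (b₁ ⊗ₜ[k] b₂) = -(((-1 : k) ^ (ia * j)) • mul (S b₁) (bracket a b₂))) ∧
        ∀ b : A,
          TensorProduct.lift mul
            ((TensorProduct.map ((bracket a) ∘ₗ S) LinearMap.id) (comul b)) = E' (comul b)) :=
  ⟨fun _ _ hb => hA.antipode_mul_bracket hb, fun _ _ ha => hA.bracket_antipode_mul ha⟩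

end DGPH
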